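/- arXiv:2102.02663 — 5 statements merged into one kernel-verified Lean document; each statement's English description precedes it below -/
import Mathlib

section
/- For x > 0 and ν > -1/2, the modified Bessel function of the first kind satisfies I_ν(x) > I_{ν+1}(x). -/
/-!
Write `f(x) = ∑ aₙ xⁿ` for the power series with `I_ν(x) - I_{ν+1}(x) = (x/2)^ν f(x)`: the
even coefficients come from `I_ν`, the odd ones from `-I_{ν+1}`. For `ν ≥ -1/2` the series
`f + f'` has nonnegative coefficients: `aₙ + (n+1) aₙ₊₁` vanishes for odd `n` and is a positive
multiple of `2ν + 1` for even `n`. Since `(eˣ f)' = eˣ (f + f')`, the power series `eˣ f(x)`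
then has nonnegative coefficients and constant term `a₀ = 1 / Γ(ν+1) > 0`, so `eˣ f(x) > 0`
for `x ≥ 0`.
-/

open Real

/-- Modified Bessel function of the first kind. -/
noncomputable def besselI (ν x : ℝ) : ℝ :=
  ∑' k : ℕ, (x / 2) ^ (ν + 2 * (k : ℝ)) / (Real.Gamma (ν + k + 1) * k.factorial)

open Finset PowerSeries
open scoped Nat

theorem Real.pow_mul_Gamma_le_Gamma_add_nat {c s : ℝ} (hc : 0 < c) (hcs : c ≤ s) (k : ℕ) :
    c ^ k * Gamma s ≤ Gamma (s + k) := by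
  induction k with
  | zero => simp
  | succ k ih =>
    have hk : 0 ≤ (k : ℝ) := k.cast_nonneg
    have hs : 0 < s + k := by linarith
    calc c ^ (k + 1) * Gamma s = c * (c ^ k * Gamma s) := by ring
      _ ≤ (s + k) * Gamma (s + k) :=
        mul_le_mul (by linarith) ih
          (mul_nonneg (by positivity) (Gamma_pos_of_pos (by linarith)).le) hs.le
      _ = Gamma (s + (k + 1 : ℕ)) := by
        rw [Nat.cast_succ, ← add_assoc, Gamma_add_one hs.ne']

theorem Real.summable_pow_div_factorial_half (x : ℝ) :
    Summable fun n : ℕ ↦ x ^ n / (n / 2)! := by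
  apply Summable.even_add_odd
  · simpa [pow_mul] using summable_pow_div_factorial (x ^ 2)
  · refine ((summable_pow_div_factorial (x ^ 2)).mul_left x).congr fun k ↦ ?_
    rw [show (2 * k + 1) / 2 = k by omega, pow_succ x (2 * k), pow_mul]
    ring

namespace PowerSeries

variable {K : Type*} [Field K] [LinearOrder K] [IsStrictOrderedRing K]

theorem coeff_mul_nonneg {f g : K⟦X⟧} (hf : ∀ n, 0 ≤ coeff n f)
    (hg : ∀ n, 0 ≤ coeff n g) (n : ℕ) : 0 ≤ coeff n (f * g) := by
  rw [coeff_mul]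
  exact sum_nonneg fun p _ ↦ mul_nonneg (hf p.1) (hg p.2)

theorem coeff_exp_nonneg (n : ℕ) : 0 ≤ coeff n (exp K) := by
  rw [coeff_exp]
  simp only [one_div, map_inv₀, map_natCast]
  positivity

theorem coeff_exp_mul_nonneg {f : K⟦X⟧} (h₀ : 0 ≤ constantCoeff f)
    (hf : ∀ n, 0 ≤ coeff n (f + d⁄dX K f)) (n : ℕ) : 0 ≤ coeff n (exp K * f) := by
  cases n with
  | zero => simpa using h₀
  | succ n =>
    have hderiv : d⁄dX K (exp K * f) = exp K * (f + d⁄dX K f) := by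
      rw [Derivation.leibniz, derivative_exp, smul_eq_mul, smul_eq_mul]
      ring
    have h := coeff_mul_nonneg coeff_exp_nonneg hf n
    rw [← hderiv, coeff_derivative] at h
    exact nonneg_of_mul_nonneg_left h (by positivity)

end PowerSeries

theorem tsum_mul_pow_pos_of_add_succ_mul_nonneg {a : ℕ → ℝ} {x : ℝ} (hx : 0 ≤ x)
    (ha : Summable fun n ↦ ‖a n * x ^ n‖) (h₀ : 0 < a 0)
    (hstep : ∀ n, 0 ≤ a n + (n + 1) * a (n + 1)) : 0 < ∑' n, a n * x ^ n := by
  have hexp : Summable fun n ↦ ‖x ^ n / (n ! : ℝ)‖ :=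
    (Real.summable_pow_div_factorial x).norm
  have hcoeff (n : ℕ) : ∑ p ∈ antidiagonal n, x ^ p.1 / p.1 ! * (a p.2 * x ^ p.2) =
      coeff n (exp ℝ * mk a) * x ^ n := by
    rw [coeff_mul, sum_mul]
    refine sum_congr rfl fun p hp ↦ ?_
    rw [← mem_antidiagonal.mp hp, pow_add]
    simp only [coeff_exp, coeff_mk, one_div, map_inv₀, map_natCast]
    ring
  have hcauchy : (∑' n, x ^ n / n !) * ∑' n, a n * x ^ n =
      ∑' n, coeff n (exp ℝ * mk a) * x ^ n := by
    simp only [tsum_mul_tsum_eq_tsum_sum_antidiagonal_of_summable_norm hexp ha, hcoeff]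
  have hsummable : Summable fun n ↦ coeff n (exp ℝ * mk a) * x ^ n := by
    simpa only [hcoeff] using
      (summable_norm_sum_mul_antidiagonal_of_summable_norm hexp ha).of_norm
  have hnonneg (n : ℕ) : 0 ≤ coeff n (exp ℝ * mk a) * x ^ n := by
    refine mul_nonneg (coeff_exp_mul_nonneg (by simpa using h₀.le) (fun n ↦ ?_) n)
      (by positivity)
    simpa [coeff_derivative, mul_comm] using hstep n
  have hpos : 0 < ∑' n, coeff n (exp ℝ * mk a) * x ^ n :=
    calc 0 < a 0 := h₀
      _ = coeff 0 (exp ℝ * mk a) * x ^ 0 := by simp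
      _ ≤ _ := hsummable.le_tsum 0 fun n _ ↦ hnonneg n
  rw [← hcauchy, (NormedSpace.expSeries_div_hasSum_exp x).tsum_eq, ← Real.exp_eq_exp_ℝ]
    at hpos
  exact pos_of_mul_pos_right hpos (Real.exp_pos x).le

noncomputable def besselIDiffCoeff (ν : ℝ) (n : ℕ) : ℝ :=
  (-1) ^ n / (2 ^ n * Gamma (ν + ((n + 1) / 2 : ℕ) + 1) * (n / 2)!)

theorem besselIDiffCoeff_two_mul (ν : ℝ) (k : ℕ) :
    besselIDiffCoeff ν (2 * k) = 1 / (2 ^ (2 * k) * Gamma (ν + k + 1) * k !) := by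
  rw [besselIDiffCoeff, show (2 * k + 1) / 2 = k by omega, show 2 * k / 2 = k by omega]
  simp [pow_mul]

theorem besselIDiffCoeff_two_mul_add_one (ν : ℝ) (k : ℕ) :
    besselIDiffCoeff ν (2 * k + 1) = -1 / (2 ^ (2 * k + 1) * Gamma (ν + 1 + k + 1) * k !) := by
  rw [besselIDiffCoeff, show (2 * k + 1 + 1) / 2 = k + 1 by omega,
    show (2 * k + 1) / 2 = k by omega, pow_succ, pow_mul]
  push_cast
  ring_nf

theorem abs_besselIDiffCoeff_le {ν : ℝ} (hν : -1 / 2 ≤ ν) (n : ℕ) :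
    |besselIDiffCoeff ν n| ≤ 1 / (Gamma (ν + 1) * (n / 2)!) := by
  set m := (n + 1) / 2
  have hΓ₁ : 0 < Gamma (ν + 1) := Gamma_pos_of_pos (by linarith)
  have hΓm : 0 < Gamma (ν + m + 1) :=
    Gamma_pos_of_pos (by linarith [(Nat.cast_nonneg m : (0 : ℝ) ≤ m)])
  have hbound : Gamma (ν + 1) ≤ 2 ^ n * Gamma (ν + m + 1) := by
    have h := pow_mul_Gamma_le_Gamma_add_nat (by norm_num : (0 : ℝ) < 1 / 2)
      (by linarith : 1 / 2 ≤ ν + 1) m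
    calc Gamma (ν + 1) = 2 ^ m * ((1 / 2) ^ m * Gamma (ν + 1)) := by
          rw [← mul_assoc, ← mul_pow]; norm_num
      _ ≤ 2 ^ n * Gamma (ν + 1 + m) :=
          mul_le_mul (pow_le_pow_right₀ one_le_two (by omega)) h (by positivity) (by positivity)
      _ = 2 ^ n * Gamma (ν + m + 1) := by rw [add_right_comm]
  rw [besselIDiffCoeff, abs_div, abs_pow, abs_neg, abs_one, one_pow,
    abs_of_pos (by positivity)]
  gcongr

theorem besselIDiffCoeff_two_mul_add_succ_mul {ν : ℝ} {k : ℕ} (h : ν + k + 1 ≠ 0) :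
    besselIDiffCoeff ν (2 * k) + ((2 * k : ℕ) + 1) * besselIDiffCoeff ν (2 * k + 1) =
      (2 * ν + 1) / (2 ^ (2 * k + 1) * Gamma (ν + 1 + k + 1) * k !) := by
  rw [besselIDiffCoeff_two_mul, besselIDiffCoeff_two_mul_add_one,
    show ν + 1 + k + 1 = ν + k + 1 + 1 by ring, Gamma_add_one h]
  push_cast
  field_simp
  ring

theorem besselIDiffCoeff_two_mul_add_one_add_succ_mul (ν : ℝ) (k : ℕ) :
    besselIDiffCoeff ν (2 * k + 1) + ((2 * k + 1 : ℕ) + 1) * besselIDiffCoeff ν (2 * k + 1 + 1) =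
      0 := by
  rw [besselIDiffCoeff_two_mul_add_one, show 2 * k + 1 + 1 = 2 * (k + 1) by ring,
    besselIDiffCoeff_two_mul, Nat.factorial_succ]
  push_cast
  rw [show ν + (k + 1) + 1 = ν + 1 + k + 1 by ring]
  field_simp
  ring

theorem besselIDiffCoeff_add_succ_mul_nonneg {ν : ℝ} (hν : -1 / 2 ≤ ν) (n : ℕ) :
    0 ≤ besselIDiffCoeff ν n + (n + 1) * besselIDiffCoeff ν (n + 1) := by
  obtain ⟨k, rfl | rfl⟩ := Nat.even_or_odd' n
  · have hk : 0 ≤ (k : ℝ) := k.cast_nonneg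
    rw [besselIDiffCoeff_two_mul_add_succ_mul (by linarith)]
    exact div_nonneg (by linarith) (mul_nonneg (mul_nonneg (by positivity)
      (Gamma_pos_of_pos (by linarith)).le) (by positivity))
  · rw [besselIDiffCoeff_two_mul_add_one_add_succ_mul]

theorem summable_norm_besselIDiffCoeff_mul_pow {ν : ℝ} (hν : -1 / 2 ≤ ν) (x : ℝ) :
    Summable fun n ↦ ‖besselIDiffCoeff ν n * x ^ n‖ := by
  refine Summable.of_nonneg_of_le (fun _ ↦ norm_nonneg _) (fun n ↦ ?_)
    ((summable_pow_div_factorial_half |x|).mul_left (Gamma (ν + 1))⁻¹)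
  rw [norm_mul, norm_pow, Real.norm_eq_abs, Real.norm_eq_abs, ← mul_div_assoc, ← div_eq_inv_mul,
    div_div, ← mul_one_div (|x| ^ n), mul_comm (|x| ^ n)]
  gcongr
  exact abs_besselIDiffCoeff_le hν n

theorem besselI_sub_besselI_add_one {ν x : ℝ} (hν : -1 / 2 ≤ ν) (hx : 0 < x) :
    besselI ν x - besselI (ν + 1) x = (x / 2) ^ ν * ∑' n, besselIDiffCoeff ν n * x ^ n := by
  have hs : Summable fun n ↦ besselIDiffCoeff ν n * x ^ n :=
    (summable_norm_besselIDiffCoeff_mul_pow hν x).of_norm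
  have heven : Summable fun k ↦ besselIDiffCoeff ν (2 * k) * x ^ (2 * k) :=
    hs.comp_injective (mul_right_injective₀ two_ne_zero)
  have hodd : Summable fun k ↦ besselIDiffCoeff ν (2 * k + 1) * x ^ (2 * k + 1) :=
    hs.comp_injective ((add_left_injective 1).comp (mul_right_injective₀ two_ne_zero))
  have hx2 : 0 < x / 2 := half_pos hx
  rw [← tsum_even_add_odd (f := fun n ↦ besselIDiffCoeff ν n * x ^ n) heven hodd, mul_add,
    ← tsum_mul_left, ← tsum_mul_left, besselI, besselI, sub_eq_add_neg, ← tsum_neg]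
  congr 1 <;> refine tsum_congr fun k ↦ ?_
  · rw [besselIDiffCoeff_two_mul, show 2 * (k : ℝ) = (2 * k : ℕ) by push_cast; rfl,
      rpow_add hx2, rpow_natCast, div_pow]
    field_simp
  · rw [besselIDiffCoeff_two_mul_add_one,
      show ν + 1 + 2 * (k : ℝ) = ν + (2 * k + 1 : ℕ) by push_cast; ring, rpow_add hx2,
      rpow_natCast, div_pow]
    field_simp

theorem besselI_gt_besselI_succ {x ν : ℝ} (hx : 0 < x) (hν : -1/2 < ν) :
    besselI ν x > besselI (ν + 1) x := by
  have hcoeff₀ : 0 < besselIDiffCoeff ν 0 := by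
    simpa [besselIDiffCoeff] using Gamma_pos_of_pos (by linarith : 0 < ν + 1)
  have hseries : 0 < ∑' n, besselIDiffCoeff ν n * x ^ n :=
    tsum_mul_pow_pos_of_add_succ_mul_nonneg hx.le
      (summable_norm_besselIDiffCoeff_mul_pow hν.le x) hcoeff₀
      (besselIDiffCoeff_add_succ_mul_nonneg hν.le)
  rw [gt_iff_lt, ← sub_pos, besselI_sub_besselI_add_one hν.le hx]
  exact mul_pos (rpow_pos_of_pos (half_pos hx) ν) hseries
end

section
/- For ν > -1/2, the function y(x) = e^{-x} (x/2)^{-ν} I_ν(x) is strictly decreasing on (0, ∞). -/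
open Real

/-!
Write `e^{-x} (x/2)^{-ν} I_ν(x) = e^{-2x} h(x)` with `h = e^x g` and `g(x) = (x/2)^{-ν} I_ν(x)`.
Since `x g'' + (2ν+1) g' = x g`, the series `h(x) = ∑ c_m x^m` solves Kummer's equation
`x h'' + (2ν+1) h' = 2x h' + (2ν+1) h`, so `(m+1)(m+2ν+1) c_{m+1} = (2m+2ν+1) c_m`. For `ν > -1/2`
this gives `c_m > 0` and `(m+1) c_{m+1} < 2 c_m`, a coefficientwise form of `h' < 2h`; comparing
`h(a+t)` termwise with the Cauchy product of `e^{2t}` and `h(a)` then gives `h(a+t) < e^{2t} h(a)`.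
Both differential equations are handled as identities of formal power series.
-/

open Finset Nat PowerSeries

section GrowthBound

variable {c : ℕ → ℝ} {L : ℝ}

theorem mul_factorial_le_of_succ_mul_le (hL : 0 ≤ L) (h : ∀ m, (m + 1) * c (m + 1) ≤ L * c m)
    (i j : ℕ) : c (i + j) * (i + j)! ≤ L ^ i * (c j * j !) := by
  induction i with
  | zero => simp
  | succ i ih =>
    calc c (i + 1 + j) * (i + 1 + j)! = ((i + j : ℕ) + 1) * c (i + j + 1) * (i + j)! := by
          rw [show i + 1 + j = i + j + 1 by ring, factorial_succ]; push_cast; ring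
      _ ≤ L * c (i + j) * (i + j)! := mul_le_mul_of_nonneg_right (h _) (by positivity)
      _ ≤ L * (L ^ i * (c j * j !)) := by rw [mul_assoc]; gcongr
      _ = L ^ (i + 1) * (c j * j !) := by ring

theorem summable_mul_pow_of_succ_mul_le (hc : ∀ m, 0 ≤ c m) (hL : 0 ≤ L)
    (h : ∀ m, (m + 1) * c (m + 1) ≤ L * c m) (x : ℝ) : Summable fun m ↦ c m * x ^ m := by
  refine .of_norm_bounded ((summable_pow_div_factorial (L * |x|)).mul_left (c 0)) fun m ↦ ?_
  have hcm : c m ≤ L ^ m * c 0 / m ! := by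
    rw [le_div_iff₀ (by positivity)]
    simpa using mul_factorial_le_of_succ_mul_le hL h m 0
  calc ‖c m * x ^ m‖ = c m * |x| ^ m := by
        rw [norm_mul, norm_pow, norm_of_nonneg (hc m), norm_eq_abs]
    _ ≤ L ^ m * c 0 / m ! * |x| ^ m := by gcongr
    _ = c 0 * ((L * |x|) ^ m / m !) := by ring

theorem mul_add_pow_le_sum_antidiagonal (hL : 0 ≤ L) (h : ∀ m, (m + 1) * c (m + 1) ≤ L * c m)
    {a t : ℝ} (ha : 0 ≤ a) (ht : 0 ≤ t) (m : ℕ) :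
    c m * (t + a) ^ m ≤ ∑ p ∈ antidiagonal m, (L * t) ^ p.1 / p.1 ! * (c p.2 * a ^ p.2) := by
  rw [(Commute.all t a).add_pow', mul_sum]
  refine sum_le_sum fun ⟨i, j⟩ hij ↦ ?_
  rw [HasAntidiagonal.mem_antidiagonal] at hij
  subst hij
  have key : c (i + j) * (i + j).choose i ≤ L ^ i * c j / i ! := by
    have := mul_factorial_le_of_succ_mul_le hL h i j
    rw [← add_choose_mul_factorial_mul_factorial, ← choose_symm_add] at this
    rw [le_div_iff₀ (by positivity)]
    push_cast at this
    exact le_of_mul_le_mul_right (by linarith) (by positivity : (0 : ℝ) < j !)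
  calc c (i + j) * ((i + j).choose i • (t ^ i * a ^ j))
      = c (i + j) * (i + j).choose i * (t ^ i * a ^ j) := by rw [nsmul_eq_mul]; ring
    _ ≤ L ^ i * c j / i ! * (t ^ i * a ^ j) := by gcongr
    _ = (L * t) ^ i / i ! * (c j * a ^ j) := by ring

theorem tsum_mul_add_pow_lt_exp_mul_tsum (hc : ∀ m, 0 ≤ c m)
    (h : ∀ m, (m + 1) * c (m + 1) < L * c m) {a t : ℝ} (ha : 0 ≤ a) (ht : 0 < t) :
    ∑' m, c m * (t + a) ^ m < Real.exp (L * t) * ∑' m, c m * a ^ m := by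
  have hL : 0 ≤ L := by nlinarith [h 0, hc 0, hc 1]
  have h' m := (h m).le
  have hexp := summable_norm_iff.mpr (summable_pow_div_factorial (L * t))
  have hc' := summable_norm_iff.mpr (summable_mul_pow_of_succ_mul_le hc hL h' a)
  rw [exp_eq_exp_ℝ, NormedSpace.exp_eq_tsum_div,
    tsum_mul_tsum_eq_tsum_sum_antidiagonal_of_summable_norm hexp hc']
  refine Summable.tsum_lt_tsum (i := 1) (mul_add_pow_le_sum_antidiagonal hL h' ha ht.le) ?_
    (summable_mul_pow_of_succ_mul_le hc hL h' _)
    (summable_norm_sum_mul_antidiagonal_of_summable_norm hexp hc').of_norm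
  have h₀ := mul_lt_mul_of_pos_right (h 0) ht
  norm_num [Nat.sum_antidiagonal_succ] at h₀ ⊢
  linarith

end GrowthBound

theorem coeff_X_mul_derivative {R : Type*} [CommSemiring R] (f : R⟦X⟧) (n : ℕ) :
    coeff n (X * d⁄dX R f) = n * coeff n f := by
  cases n with
  | zero => simp
  | succ n => rw [coeff_succ_X_mul, coeff_derivative, mul_comm]; push_cast; rfl

theorem tsum_coeff_exp_mul_mul_pow (f : ℝ⟦X⟧) {x : ℝ} (hf : Summable fun n ↦ coeff n f * x ^ n) :
    ∑' n, coeff n (exp ℝ * f) * x ^ n = Real.exp x * ∑' n, coeff n f * x ^ n := by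
  have hexp := summable_norm_iff.mpr (summable_pow_div_factorial x)
  rw [exp_eq_exp_ℝ, NormedSpace.exp_eq_tsum_div,
    tsum_mul_tsum_eq_tsum_sum_antidiagonal_of_summable_norm hexp (summable_norm_iff.mpr hf)]
  refine tsum_congr fun n ↦ ?_
  rw [coeff_mul, sum_mul]
  refine sum_congr rfl fun ⟨i, j⟩ hij ↦ ?_
  rw [HasAntidiagonal.mem_antidiagonal] at hij
  subst hij
  simp only [coeff_exp, one_div, eq_ratCast, Rat.cast_inv, Rat.cast_natCast, pow_add]
  ring

noncomputable def besselICoeff (ν : ℝ) (n : ℕ) : ℝ :=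
  if Even n then (2 ^ n * Gamma (ν + (n / 2 : ℕ) + 1) * (n / 2)!)⁻¹ else 0

noncomputable def besselISeries (ν : ℝ) : ℝ⟦X⟧ := PowerSeries.mk (besselICoeff ν)

noncomputable def expMulBesselICoeff (ν : ℝ) (m : ℕ) : ℝ := coeff m (exp ℝ * besselISeries ν)

section BesselCoefficients

variable {ν : ℝ}

theorem besselICoeff_two_mul (k : ℕ) :
    besselICoeff ν (2 * k) = (2 ^ (2 * k) * Gamma (ν + k + 1) * k !)⁻¹ := by
  simp [besselICoeff]

theorem besselICoeff_two_mul_add_one (k : ℕ) : besselICoeff ν (2 * k + 1) = 0 := by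
  simp [besselICoeff]

theorem besselICoeff_nonneg (hν : -1 < ν) (n : ℕ) : 0 ≤ besselICoeff ν n := by
  unfold besselICoeff
  split_ifs
  · have := Gamma_pos_of_pos (show 0 < ν + (n / 2 : ℕ) + 1 by
      linarith [(n / 2 : ℕ).cast_nonneg (α := ℝ)])
    positivity
  · rfl

theorem besselICoeff_add_two (hν : -1 < ν) (n : ℕ) :
    (n + 2) * (n + 2 + 2 * ν) * besselICoeff ν (n + 2) = besselICoeff ν n := by
  obtain ⟨k, rfl | rfl⟩ := Nat.even_or_odd' n
  · have hk : 0 < ν + k + 1 := by linarith [k.cast_nonneg (α := ℝ)]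
    rw [show 2 * k + 2 = 2 * (k + 1) by ring, besselICoeff_two_mul, besselICoeff_two_mul]
    push_cast
    rw [show ν + (k + 1) + 1 = (ν + k + 1) + 1 by ring, Gamma_add_one hk.ne', factorial_succ]
    have := Gamma_pos_of_pos hk
    push_cast
    field_simp
    ring
  · rw [show 2 * k + 1 + 2 = 2 * (k + 1) + 1 by ring, besselICoeff_two_mul_add_one,
      besselICoeff_two_mul_add_one, mul_zero]

theorem besselISeries_ode (hν : -1 < ν) :
    X * d⁄dX ℝ (d⁄dX ℝ (besselISeries ν)) + C (2 * ν + 1) * d⁄dX ℝ (besselISeries ν)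
      = X * besselISeries ν := by
  ext n
  rw [map_add, coeff_X_mul_derivative, coeff_C_mul, coeff_derivative, besselISeries, coeff_mk]
  cases n with
  | zero => simp [besselICoeff]
  | succ n =>
    rw [coeff_succ_X_mul, coeff_mk, ← besselICoeff_add_two hν n]
    push_cast
    ring

theorem exp_mul_besselISeries_ode (hν : -1 < ν) :
    X * d⁄dX ℝ (d⁄dX ℝ (exp ℝ * besselISeries ν))
        + C (2 * ν + 1) * d⁄dX ℝ (exp ℝ * besselISeries ν)
      = C 2 * (X * d⁄dX ℝ (exp ℝ * besselISeries ν))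
        + C (2 * ν + 1) * (exp ℝ * besselISeries ν) := by
  have hG := besselISeries_ode hν
  simp only [Derivation.leibniz, derivative_exp, smul_eq_mul, map_add] at hG ⊢
  rw [map_ofNat]
  linear_combination exp ℝ * hG

theorem expMulBesselICoeff_succ (hν : -1 < ν) (m : ℕ) :
    (m + 1) * (m + 2 * ν + 1) * expMulBesselICoeff ν (m + 1)
      = (2 * m + 2 * ν + 1) * expMulBesselICoeff ν m := by
  have h := congrArg (coeff m) (exp_mul_besselISeries_ode hν)
  simp only [(coeff m).map_add, coeff_X_mul_derivative, coeff_C_mul, coeff_derivative] at h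
  unfold expMulBesselICoeff
  linear_combination h

theorem expMulBesselICoeff_pos (hν : -1/2 < ν) (m : ℕ) : 0 < expMulBesselICoeff ν m := by
  induction m with
  | zero =>
    simpa [expMulBesselICoeff, besselISeries, besselICoeff] using
      Gamma_pos_of_pos (show 0 < ν + 1 by linarith)
  | succ m ih =>
    have hrec := expMulBesselICoeff_succ (ν := ν) (by linarith) m
    have : (0 : ℝ) ≤ m := m.cast_nonneg
    have h1 : 0 < (m + 1) * (m + 2 * ν + 1) := by nlinarith
    have h2 : 0 < (2 * m + 2 * ν + 1) * expMulBesselICoeff ν m := by nlinarith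
    rw [← hrec] at h2
    exact pos_of_mul_pos_right h2 h1.le

theorem succ_mul_expMulBesselICoeff_lt (hν : -1/2 < ν) (m : ℕ) :
    (m + 1) * expMulBesselICoeff ν (m + 1) < 2 * expMulBesselICoeff ν m := by
  have hrec := expMulBesselICoeff_succ (ν := ν) (by linarith) m
  have hc := expMulBesselICoeff_pos hν m
  have : (0 : ℝ) ≤ m := m.cast_nonneg
  refine lt_of_mul_lt_mul_right (a := m + 2 * ν + 1) ?_ (by linarith)
  nlinarith

theorem hasSum_besselICoeff_mul_pow (hν : -1 < ν) {x : ℝ} (hx : 0 < x) :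
    HasSum (fun n ↦ besselICoeff ν n * x ^ n) ((x / 2) ^ (-ν) * besselI ν x) := by
  have hstep (k : ℕ) : (k + 1) * besselICoeff ν (2 * (k + 1))
      ≤ (4 * (ν + 1))⁻¹ * besselICoeff ν (2 * k) := by
    have hrec := besselICoeff_add_two hν (2 * k)
    have hk : 0 ≤ (k + 1) * k * besselICoeff ν (2 * (k + 1)) := by
      have := besselICoeff_nonneg hν (2 * (k + 1))
      positivity
    rw [← div_eq_inv_mul, le_div_iff₀ (by linarith), ← hrec, show 2 * k + 2 = 2 * (k + 1) by ring]
    push_cast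
    linarith
  have heven : Summable fun k ↦ besselICoeff ν (2 * k) * (x ^ 2) ^ k :=
    summable_mul_pow_of_succ_mul_le (fun k ↦ besselICoeff_nonneg hν _)
      (inv_nonneg.2 (by linarith)) hstep (x ^ 2)
  have hterm (k : ℕ) : (x / 2) ^ (-ν) * ((x / 2) ^ (ν + 2 * (k : ℝ)) / (Gamma (ν + k + 1) * k !))
      = besselICoeff ν (2 * k) * (x ^ 2) ^ k := by
    rw [besselICoeff_two_mul, mul_div_assoc', ← rpow_add (by positivity),
      show -ν + (ν + 2 * (k : ℝ)) = (2 * k : ℕ) by push_cast; ring, rpow_natCast, div_pow, pow_mul]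
    field_simp
  have hodd : (fun k ↦ besselICoeff ν (2 * k + 1) * x ^ (2 * k + 1)) = 0 := by
    ext k; simp [besselICoeff_two_mul_add_one]
  rw [besselI, ← tsum_mul_left, tsum_congr hterm, ← add_zero (∑' _, _)]
  refine HasSum.even_add_odd ?_ (hodd ▸ hasSum_zero)
  simpa only [pow_mul] using heven.hasSum

theorem exp_neg_mul_rpow_neg_mul_besselI (hν : -1 < ν) {x : ℝ} (hx : 0 < x) :
    Real.exp (-x) * (x / 2) ^ (-ν) * besselI ν x
      = Real.exp (-(2 * x)) * ∑' m, expMulBesselICoeff ν m * x ^ m := by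
  have h := hasSum_besselICoeff_mul_pow hν hx
  have hcoeff (n : ℕ) : coeff n (besselISeries ν) = besselICoeff ν n := coeff_mk _ _
  simp only [expMulBesselICoeff]
  rw [tsum_coeff_exp_mul_mul_pow _ (by simpa only [hcoeff] using h.summable)]
  simp only [hcoeff, h.tsum_eq, ← mul_assoc, ← Real.exp_add]
  ring_nf

end BesselCoefficients

theorem strictAntiOn_exp_neg_mul_besselI {ν : ℝ} (hν : -1/2 < ν) :
    StrictAntiOn (fun x : ℝ => Real.exp (-x) * (x / 2) ^ (-ν) * besselI ν x)
      (Set.Ioi (0 : ℝ)) := by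
  intro a ha b hb hab
  have hν' : -1 < ν := by linarith
  have key := tsum_mul_add_pow_lt_exp_mul_tsum (fun m ↦ (expMulBesselICoeff_pos hν m).le)
    (succ_mul_expMulBesselICoeff_lt hν) (le_of_lt ha) (sub_pos.2 hab)
  rw [sub_add_cancel] at key
  simp only [exp_neg_mul_rpow_neg_mul_besselI hν' ha, exp_neg_mul_rpow_neg_mul_besselI hν' hb]
  calc Real.exp (-(2 * b)) * ∑' m, expMulBesselICoeff ν m * b ^ m
      < Real.exp (-(2 * b)) * (Real.exp (2 * (b - a)) * ∑' m, expMulBesselICoeff ν m * a ^ m) := by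
        gcongr
    _ = Real.exp (-(2 * a)) * ∑' m, expMulBesselICoeff ν m * a ^ m := by
        rw [← mul_assoc, ← Real.exp_add]; ring_nf
end

section
/- For ν > 1/2, the function y(x) = x^ν e^x K_ν(x) is strictly increasing on (0, ∞). -/
/-!
Integrating the derivative of `t ↦ e^{-x cosh t} sinh (ν t)` over `(0, ∞)` gives the recurrence
`K_{ν+1} - K_{ν-1} = (2ν/x) K_ν`, and differentiating under the integral sign gives
`K_ν' = -(K_{ν-1} + K_{ν+1}) / 2 = -K_{ν-1} - (ν/x) K_ν`. Hence the derivative of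
`x^ν e^x K_ν(x)` is `x^ν e^x (K_ν(x) - K_{ν-1}(x))`, which is positive because
`cosh ((ν - 1) t) < cosh (ν t)` for `t > 0` as soon as `|ν - 1| < ν`, i.e. `ν > 1/2`.
-/

open Real

/-- Modified Bessel function of the second kind (Macdonald function), via its
integral representation for positive argument. -/
noncomputable def besselK (ν x : ℝ) : ℝ :=
  ∫ t in Set.Ioi (0 : ℝ), Real.exp (-x * Real.cosh t) * Real.cosh (ν * t)

open MeasureTheory Set

lemma cosh_mul_cosh_mul (a t : ℝ) :
    cosh t * cosh (a * t) = (cosh ((a - 1) * t) + cosh ((a + 1) * t)) / 2 := by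
  rw [show (a - 1) * t = a * t - t by ring, show (a + 1) * t = a * t + t by ring,
    cosh_sub, cosh_add]
  ring

lemma sinh_mul_sinh_mul (a t : ℝ) :
    sinh t * sinh (a * t) = (cosh ((a + 1) * t) - cosh ((a - 1) * t)) / 2 := by
  rw [show (a - 1) * t = a * t - t by ring, show (a + 1) * t = a * t + t by ring,
    cosh_sub, cosh_add]
  ring

lemma sq_div_four_le_cosh {t : ℝ} (ht : 0 ≤ t) : t ^ 2 / 4 ≤ cosh t := by
  rw [cosh_eq]
  nlinarith [quadratic_le_exp_of_nonneg ht, exp_pos (-t)]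

lemma integrableOn_exp_neg_mul_cosh_mul_exp {x : ℝ} (hx : 0 < x) (a : ℝ) :
    IntegrableOn (fun t => exp (-x * cosh t) * exp (a * t)) (Ioi 0) := by
  -- completing the square in `a t - x t² / 4` gives a Gaussian majorant
  have hg : Integrable (fun t => exp (a ^ 2 / x) * exp (-(x / 4) * (t - 2 * a / x) ^ 2)) :=
    ((integrable_exp_neg_mul_sq (by positivity)).comp_sub_right _).const_mul _
  refine hg.integrableOn.mono' (by fun_prop) ?_
  filter_upwards [ae_restrict_mem measurableSet_Ioi] with t ht
  rw [norm_of_nonneg (by positivity), ← exp_add, ← exp_add, exp_le_exp]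
  have hsq : a ^ 2 / x + -(x / 4) * (t - 2 * a / x) ^ 2 = a * t - x * (t ^ 2 / 4) := by
    field_simp
    ring
  rw [hsq]
  nlinarith [mul_le_mul_of_nonneg_left (sq_div_four_le_cosh ht.out.le) hx.le]

lemma integrableOn_exp_neg_mul_cosh_mul_cosh {x : ℝ} (hx : 0 < x) (a : ℝ) :
    IntegrableOn (fun t => exp (-x * cosh t) * cosh (a * t)) (Ioi 0) := by
  have h := ((integrableOn_exp_neg_mul_cosh_mul_exp hx a).add
    (integrableOn_exp_neg_mul_cosh_mul_exp hx (-a))).div_const 2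
  refine IntegrableOn.congr_fun h (fun t _ => ?_) measurableSet_Ioi
  simp only [Pi.add_apply, cosh_eq (a * t), neg_mul]
  ring

lemma integrableOn_exp_neg_mul_cosh_mul_sinh {x : ℝ} (hx : 0 < x) (a : ℝ) :
    IntegrableOn (fun t => exp (-x * cosh t) * sinh (a * t)) (Ioi 0) := by
  have h := ((integrableOn_exp_neg_mul_cosh_mul_exp hx a).sub
    (integrableOn_exp_neg_mul_cosh_mul_exp hx (-a))).div_const 2
  refine IntegrableOn.congr_fun h (fun t _ => ?_) measurableSet_Ioi
  simp only [Pi.sub_apply, sinh_eq (a * t), neg_mul]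
  ring

lemma hasDerivAt_exp_neg_mul_cosh_mul_sinh (x ν t : ℝ) :
    HasDerivAt (fun t => exp (-x * cosh t) * sinh (ν * t))
      (ν * (exp (-x * cosh t) * cosh (ν * t)) - x / 2 *
        (exp (-x * cosh t) * cosh ((ν + 1) * t) - exp (-x * cosh t) * cosh ((ν - 1) * t))) t := by
  have h := (((hasDerivAt_cosh t).const_mul (-x)).exp).mul
    (((hasDerivAt_id t).const_mul ν).sinh)
  refine h.congr_deriv ?_
  simp only [id, mul_one]
  linear_combination (-x * exp (-x * cosh t)) * sinh_mul_sinh_mul ν t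

lemma besselK_add_one_sub_besselK_sub_one {x : ℝ} (hx : 0 < x) (ν : ℝ) :
    besselK (ν + 1) x - besselK (ν - 1) x = 2 * ν / x * besselK ν x := by
  have hK := integrableOn_exp_neg_mul_cosh_mul_cosh hx
  have hdiff : IntegrableOn (fun t => x / 2 *
      (exp (-x * cosh t) * cosh ((ν + 1) * t) - exp (-x * cosh t) * cosh ((ν - 1) * t)))
      (Ioi 0) :=
    ((hK (ν + 1)).sub (hK (ν - 1))).const_mul (x / 2)
  have hint := ((hK ν).const_mul ν).sub hdiff
  have hderiv := hasDerivAt_exp_neg_mul_cosh_mul_sinh x ν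
  have hlim := tendsto_zero_of_hasDerivAt_of_integrableOn_Ioi (fun t _ => hderiv t) hint
    (integrableOn_exp_neg_mul_cosh_mul_sinh hx ν)
  have hFTC := integral_Ioi_of_hasDerivAt_of_tendsto' (fun t _ => hderiv t) hint hlim
  rw [integral_sub ((hK ν).const_mul ν) hdiff, integral_const_mul, integral_const_mul,
    integral_sub (hK (ν + 1)) (hK (ν - 1))] at hFTC
  simp only [mul_zero, sinh_zero, sub_zero] at hFTC
  rw [← besselK, ← besselK, ← besselK] at hFTC
  field_simp
  linarith

lemma hasDerivAt_exp_neg_mul_cosh_mul_cosh (ν t y : ℝ) :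
    HasDerivAt (fun y => exp (-y * cosh t) * cosh (ν * t))
      (-(exp (-y * cosh t) * cosh ((ν - 1) * t) + exp (-y * cosh t) * cosh ((ν + 1) * t)) / 2)
      y := by
  have h := (((hasDerivAt_neg y).mul_const (cosh t)).exp).mul_const (cosh (ν * t))
  refine h.congr_deriv ?_
  linear_combination (-exp (-y * cosh t)) * cosh_mul_cosh_mul ν t

lemma hasDerivAt_besselK {x : ℝ} (hx : 0 < x) (ν : ℝ) :
    HasDerivAt (besselK ν) (-besselK (ν - 1) x - ν / x * besselK ν x) x := by
  have hK := integrableOn_exp_neg_mul_cosh_mul_cosh (x := x) hx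
  have hK_half := integrableOn_exp_neg_mul_cosh_mul_cosh (half_pos hx)
  have hcont (y a : ℝ) : Continuous fun t => exp (-y * cosh t) * cosh (a * t) := by fun_prop
  have hbound : ∀ᵐ t ∂volume.restrict (Ioi 0), ∀ y ∈ Ioi (x / 2),
      ‖-(exp (-y * cosh t) * cosh ((ν - 1) * t) + exp (-y * cosh t) * cosh ((ν + 1) * t)) / 2‖
        ≤ (exp (-(x / 2) * cosh t) * cosh ((ν - 1) * t)
          + exp (-(x / 2) * cosh t) * cosh ((ν + 1) * t)) / 2 := by
    refine ae_of_all _ fun t y hy => ?_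
    have hexp : exp (-y * cosh t) ≤ exp (-(x / 2) * cosh t) := by
      gcongr
      exact hy.out.le
    rw [norm_div, norm_neg, Real.norm_two, norm_of_nonneg (by positivity)]
    gcongr
  have h := hasDerivAt_integral_of_dominated_loc_of_deriv_le (Ioi_mem_nhds (half_lt_self hx))
    (.of_forall fun y => (hcont y ν).aestronglyMeasurable) (hK ν)
    (((hcont x _).add (hcont x _)).neg.div_const 2).aestronglyMeasurable hbound
    (((hK_half _).add (hK_half _)).div_const 2)
    (.of_forall fun t y _ => hasDerivAt_exp_neg_mul_cosh_mul_cosh ν t y)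
  refine h.2.congr_deriv ?_
  rw [integral_div, integral_neg, integral_add (hK _) (hK _), ← besselK, ← besselK,
    eq_add_of_sub_eq (besselK_add_one_sub_besselK_sub_one hx ν)]
  ring

lemma setIntegral_pos_of_forall_pos {X : Type*} [MeasurableSpace X] {μ : Measure X} {s : Set X}
    {f : X → ℝ} (hs : MeasurableSet s) (hμs : μ s ≠ 0) (hf : IntegrableOn f s μ)
    (hpos : ∀ y ∈ s, 0 < f y) : 0 < ∫ y in s, f y ∂μ := by
  refine (setIntegral_pos_iff_support_of_nonneg_ae
    (ae_restrict_of_forall_mem hs fun y hy => (hpos y hy).le) hf).2 ?_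
  have hsupp : s ⊆ Function.support f := fun y hy => (hpos y hy).ne'
  rwa [inter_eq_right.2 hsupp, pos_iff_ne_zero]

lemma besselK_lt_besselK {x μ ν : ℝ} (hx : 0 < x) (h : |μ| < |ν|) :
    besselK μ x < besselK ν x := by
  have hK := integrableOn_exp_neg_mul_cosh_mul_cosh hx
  rw [← sub_pos, besselK, besselK, ← integral_sub (hK ν) (hK μ)]
  refine setIntegral_pos_of_forall_pos measurableSet_Ioi (by simp) ((hK ν).sub (hK μ))
    fun t (ht : 0 < t) => ?_
  have hcosh : cosh (μ * t) < cosh (ν * t) := by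
    rw [cosh_lt_cosh, abs_mul, abs_mul, abs_of_pos ht]
    exact mul_lt_mul_of_pos_right h ht
  rw [← mul_sub]
  exact mul_pos (exp_pos _) (sub_pos.2 hcosh)

lemma hasDerivAt_rpow_mul_exp_mul_besselK {x : ℝ} (hx : 0 < x) (ν : ℝ) :
    HasDerivAt (fun x => x ^ ν * exp x * besselK ν x)
      (x ^ ν * exp x * (besselK ν x - besselK (ν - 1) x)) x := by
  refine (((hasDerivAt_rpow_const (Or.inl hx.ne')).mul (hasDerivAt_exp x)).mul
    (hasDerivAt_besselK hx ν)).congr_deriv ?_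
  rw [Pi.mul_apply, rpow_sub_one hx.ne']
  field_simp
  ring

theorem strictMonoOn_rpow_exp_besselK {ν : ℝ} (hν : 1/2 < ν) :
    StrictMonoOn (fun x : ℝ => x ^ ν * Real.exp x * besselK ν x)
      (Set.Ioi (0 : ℝ)) := by
  have hderiv (x : ℝ) (hx : x ∈ Ioi 0) := hasDerivAt_rpow_mul_exp_mul_besselK hx.out ν
  refine strictMonoOn_of_hasDerivWithinAt_pos (convex_Ioi 0)
    (fun x hx => (hderiv x hx).continuousAt.continuousWithinAt)
    (fun x hx => (hderiv x (interior_subset hx)).hasDerivWithinAt) fun x hx => ?_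
  rw [interior_Ioi, mem_Ioi] at hx
  have hK : besselK (ν - 1) x < besselK ν x :=
    besselK_lt_besselK hx (by rw [abs_lt, abs_of_pos (by linarith)]; constructor <;> linarith)
  exact mul_pos (by positivity) (sub_pos.2 hK)
end

section
/- For ν > -1/2, the function ψ(x) = x - log(Γ(1+ν) I_ν(x)/(x/2)^ν) satisfies ψ(0) = 0, ψ is strictly increasing on (0,∞), and ψ(x) → ∞ as x → ∞. -/
/-!
Write `I(x) = Γ(b) I_{b-1}(x) / (x/2)^{b-1} = ₀F₁(; b; x²/4)` with `b = 1 + ν`, so that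
`ψ = x - log I`, `ψ' = (I - I') / I`, and `I` solves `x I'' + (2b - 1) I' = x I`.
By this equation `(eˣ (I - I'))' = (2b - 1) eˣ I' / x > 0`, so `I' < I` on `(0, ∞)` and `ψ` is
strictly increasing. For `0 ≤ c ≤ min 1 (b - 1/2)` the same equation makes
`eˣ (x (I - I') - c I)` nondecreasing, which gives `ψ'(x) ≥ c / (2x)` for `x ≥ 1`,
so `ψ` grows at least like `(c / 2) log x`.
-/

open Real Filter

/-- The phase function `ψ(x) = x - log(Γ(1+ν) I_ν(x)/(x/2)^ν)`, written using the
normalised (entire) series `Γ(1+ν) I_ν(x)/(x/2)^ν = Σ_{k≥0} (x/2)^{2k}/((1+ν)_k k!)`. -/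
noncomputable def psiI (ν x : ℝ) : ℝ :=
  x - Real.log (∑' k : ℕ,
    (x / 2) ^ (2 * k) / ((Real.Gamma (1 + ν + k) / Real.Gamma (1 + ν)) * k.factorial))

open Set

noncomputable def powSeries (c : ℕ → ℝ) (x : ℝ) : ℝ := ∑' k, c k * x ^ k

def derivCoeff (c : ℕ → ℝ) (k : ℕ) : ℝ := (k + 1) * c (k + 1)

section PowSeries

variable {c : ℕ → ℝ}

theorem powSeries_zero (c : ℕ → ℝ) : powSeries c 0 = c 0 := by
  rw [powSeries, tsum_eq_single 0 fun k hk => by simp [hk]]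
  simp

theorem summable_mul_pow (hc : ∀ r, Summable fun k => |c k| * r ^ k) (x : ℝ) :
    Summable fun k => c k * x ^ k :=
  (hc |x|).of_norm_bounded fun k => by rw [norm_mul, norm_pow, norm_eq_abs, norm_eq_abs]

theorem summable_derivCoeff (hc : ∀ r, Summable fun k => |c k| * r ^ k) (r : ℝ) :
    Summable fun k => |derivCoeff c k| * r ^ k := by
  set R := 2 * (|r| + 1)
  refine ((summable_nat_add_iff 1).mpr (hc R)).of_norm_bounded fun k => ?_
  have hk : ((k : ℝ) + 1) * |r| ^ k ≤ R ^ (k + 1) := by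
    rw [mul_pow]
    gcongr
    · exact_mod_cast (Nat.lt_two_pow_self (n := k + 1)).le
    · calc |r| ^ k ≤ (|r| + 1) ^ k := by gcongr; linarith
        _ ≤ (|r| + 1) ^ (k + 1) := pow_le_pow_right₀ (by linarith [abs_nonneg r]) k.le_succ
  rw [norm_mul, norm_pow, Real.norm_eq_abs, Real.norm_eq_abs, abs_abs, derivCoeff, abs_mul,
    abs_of_nonneg (by positivity : (0 : ℝ) ≤ k + 1)]
  calc (k + 1) * |c (k + 1)| * |r| ^ k = |c (k + 1)| * ((k + 1) * |r| ^ k) := by ring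
    _ ≤ |c (k + 1)| * R ^ (k + 1) := by gcongr

theorem hasDerivAt_powSeries (hc : ∀ r, Summable fun k => |c k| * r ^ k) (x : ℝ) :
    HasDerivAt (powSeries c) (powSeries (derivCoeff c) x) x := by
  have hsplit : powSeries c = fun y => c 0 + ∑' k, c (k + 1) * y ^ (k + 1) := by
    funext y
    exact (summable_mul_pow hc y).tsum_eq_zero_add.trans (by simp)
  set R := |x| + 1
  have hball : ∀ y ∈ Metric.ball (0 : ℝ) R, |y| ≤ R := fun y hy =>
    (mem_ball_zero_iff.mp hy).le
  rw [hsplit]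
  refine (hasDerivAt_tsum_of_isPreconnected (summable_derivCoeff hc R) Metric.isOpen_ball
    (convex_ball 0 R).isPreconnected (g' := fun k y => derivCoeff c k * y ^ k)
    (fun k y _ => ?_) (fun k y hy => ?_) (Metric.mem_ball_self (by positivity))
    (by simp) (by simp [R])).const_add (c 0)
  · exact ((hasDerivAt_pow (k + 1) y).const_mul (c (k + 1))).congr_deriv
      (by simp [derivCoeff]; ring)
  · rw [norm_mul, norm_pow, norm_eq_abs, norm_eq_abs]
    gcongr
    exact hball y hy

theorem le_powSeries (hc : ∀ r, Summable fun k => |c k| * r ^ k) (hc0 : ∀ k, 0 ≤ c k)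
    {x : ℝ} (hx : 0 ≤ x) : c 0 ≤ powSeries c x := by
  simpa [powSeries] using
    (summable_mul_pow hc x).le_tsum 0 fun k _ => mul_nonneg (hc0 k) (pow_nonneg hx k)

end PowSeries

noncomputable def hyp0F1Coeff (b : ℝ) (k : ℕ) : ℝ :=
  (Gamma (b + k) / Gamma b * k.factorial)⁻¹

section Hyp0F1

variable {b : ℝ}

theorem hyp0F1Coeff_zero (hb : 0 < b) : hyp0F1Coeff b 0 = 1 := by
  simp [hyp0F1Coeff, (Gamma_pos_of_pos hb).ne']

theorem hyp0F1Coeff_succ (hb : 0 < b) (k : ℕ) :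
    hyp0F1Coeff b (k + 1) = hyp0F1Coeff b k / ((k + 1) * (b + k)) := by
  have hbk : 0 < b + k := by positivity
  rw [hyp0F1Coeff, hyp0F1Coeff, Nat.factorial_succ, Nat.cast_mul, Nat.cast_succ,
    ← add_assoc, Gamma_add_one hbk.ne']
  have := (Gamma_pos_of_pos hb).ne'
  field_simp

theorem hyp0F1Coeff_pos (hb : 0 < b) (k : ℕ) : 0 < hyp0F1Coeff b k := by
  have := Gamma_pos_of_pos hb
  have := Gamma_pos_of_pos (by positivity : 0 < b + k)
  unfold hyp0F1Coeff
  positivity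

theorem hyp0F1Coeff_le (hb : 0 < b) (k : ℕ) : hyp0F1Coeff b k ≤ b⁻¹ ^ k / k.factorial := by
  induction k with
  | zero => simp [hyp0F1Coeff_zero hb]
  | succ k ih =>
    rw [hyp0F1Coeff_succ hb, Nat.factorial_succ, Nat.cast_mul, pow_succ]
    calc hyp0F1Coeff b k / ((k + 1) * (b + k)) ≤ b⁻¹ ^ k / k.factorial / ((k + 1) * b) := by
          gcongr
          linarith [(Nat.cast_nonneg k : (0 : ℝ) ≤ k)]
      _ = b⁻¹ ^ k * b⁻¹ / ((k + 1 : ℕ) * k.factorial) := by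
          push_cast; field_simp

theorem summable_hyp0F1Coeff (hb : 0 < b) (r : ℝ) :
    Summable fun k => |hyp0F1Coeff b k| * r ^ k := by
  refine (Real.summable_pow_div_factorial (|r| * b⁻¹)).of_norm_bounded fun k => ?_
  rw [norm_mul, norm_pow, Real.norm_eq_abs, Real.norm_eq_abs, abs_abs,
    abs_of_pos (hyp0F1Coeff_pos hb k), mul_pow, mul_div_assoc, mul_comm]
  gcongr
  exact hyp0F1Coeff_le hb k

theorem hyp0F1_ode (hb : 0 < b) (z : ℝ) :
    z * powSeries (derivCoeff (derivCoeff (hyp0F1Coeff b))) z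
      + b * powSeries (derivCoeff (hyp0F1Coeff b)) z = powSeries (hyp0F1Coeff b) z := by
  set c := hyp0F1Coeff b
  have hc := summable_hyp0F1Coeff hb
  have he := summable_derivCoeff hc
  have hf : Summable fun j : ℕ => (j : ℝ) * derivCoeff c j * z ^ j := by
    refine (summable_nat_add_iff 1).mp
      (((summable_mul_pow (summable_derivCoeff he) z).mul_left z).congr fun k => ?_)
    simp only [c, derivCoeff]; push_cast; ring
  have hshift : z * powSeries (derivCoeff (derivCoeff c)) z
      = ∑' j : ℕ, (j : ℝ) * derivCoeff c j * z ^ j := by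
    rw [hf.tsum_eq_zero_add, powSeries, ← tsum_mul_left]
    simp only [derivCoeff, Nat.cast_zero, zero_mul, zero_add]
    exact tsum_congr fun k => by push_cast; ring
  rw [hshift, powSeries, ← tsum_mul_left, ← hf.tsum_add ((summable_mul_pow he z).mul_left b),
    powSeries]
  refine tsum_congr fun j => ?_
  have hbj : 0 < b + j := by positivity
  rw [derivCoeff, show c (j + 1) = c j / ((j + 1) * (b + j)) from hyp0F1Coeff_succ hb j]
  field_simp
  ring

end Hyp0F1

noncomputable def normBesselI (b x : ℝ) : ℝ := powSeries (hyp0F1Coeff b) (x ^ 2 / 4)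

noncomputable def normBesselI' (b x : ℝ) : ℝ :=
  x / 2 * powSeries (derivCoeff (hyp0F1Coeff b)) (x ^ 2 / 4)

noncomputable def normBesselI'' (b x : ℝ) : ℝ :=
  powSeries (derivCoeff (hyp0F1Coeff b)) (x ^ 2 / 4) / 2
    + x ^ 2 / 4 * powSeries (derivCoeff (derivCoeff (hyp0F1Coeff b))) (x ^ 2 / 4)

section NormBesselI

variable {b : ℝ}

theorem hasDerivAt_sq_div_four (x : ℝ) : HasDerivAt (fun y : ℝ => y ^ 2 / 4) (x / 2) x :=
  ((hasDerivAt_pow 2 x).div_const 4).congr_deriv (by ring)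

theorem hasDerivAt_normBesselI (hb : 0 < b) (x : ℝ) :
    HasDerivAt (normBesselI b) (normBesselI' b x) x :=
  ((hasDerivAt_powSeries (summable_hyp0F1Coeff hb) _).comp x
    (hasDerivAt_sq_div_four x)).congr_deriv (mul_comm _ _)

theorem hasDerivAt_normBesselI' (hb : 0 < b) (x : ℝ) :
    HasDerivAt (normBesselI' b) (normBesselI'' b x) x := by
  have hg := (hasDerivAt_powSeries (summable_derivCoeff (summable_hyp0F1Coeff hb)) _).comp x
    (hasDerivAt_sq_div_four x)
  exact (((hasDerivAt_id x).div_const 2).mul hg).congr_deriv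
    (by simp only [normBesselI'', Function.comp_apply, id]; ring)

theorem normBesselI_ode (hb : 0 < b) (x : ℝ) :
    x * normBesselI'' b x + (2 * b - 1) * normBesselI' b x = x * normBesselI b x := by
  rw [normBesselI, ← hyp0F1_ode hb, normBesselI'', normBesselI']
  ring

theorem normBesselI_zero (hb : 0 < b) : normBesselI b 0 = 1 := by
  simp [normBesselI, powSeries_zero, hyp0F1Coeff_zero hb]

theorem normBesselI'_zero : normBesselI' b 0 = 0 := by
  simp [normBesselI']

theorem one_le_normBesselI (hb : 0 < b) (x : ℝ) : 1 ≤ normBesselI b x :=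
  hyp0F1Coeff_zero hb ▸ le_powSeries (summable_hyp0F1Coeff hb)
    (fun k => (hyp0F1Coeff_pos hb k).le) (by positivity)

theorem normBesselI'_pos (hb : 0 < b) {x : ℝ} (hx : 0 < x) : 0 < normBesselI' b x := by
  have hc : ∀ k, 0 ≤ derivCoeff (hyp0F1Coeff b) k := fun k =>
    mul_nonneg (by positivity) (hyp0F1Coeff_pos hb _).le
  have h0 : 0 < derivCoeff (hyp0F1Coeff b) 0 := by
    simpa [derivCoeff] using hyp0F1Coeff_pos hb 1
  exact mul_pos (by positivity) (h0.trans_le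
    (le_powSeries (summable_derivCoeff (summable_hyp0F1Coeff hb)) hc (by positivity)))

theorem normBesselI'_lt (hb : 1 / 2 < b) {x : ℝ} (hx : 0 < x) :
    normBesselI' b x < normBesselI b x := by
  have hb0 : 0 < b := by linarith
  have hG : ∀ y, HasDerivAt (fun y => exp y * (normBesselI b y - normBesselI' b y))
      (exp y * (normBesselI b y - normBesselI'' b y)) y := fun y =>
    ((hasDerivAt_exp y).mul ((hasDerivAt_normBesselI hb0 y).sub
      (hasDerivAt_normBesselI' hb0 y))).congr_deriv (by simp only [Pi.sub_apply]; ring)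
  have hG_pos : ∀ y ∈ interior (Ici (0 : ℝ)),
      0 < exp y * (normBesselI b y - normBesselI'' b y) := by
    intro y hy
    rw [interior_Ici] at hy
    have hode := normBesselI_ode hb0 y
    have hI' := normBesselI'_pos hb0 hy
    refine mul_pos (exp_pos y) (pos_of_mul_pos_right (a := y) ?_ hy.le)
    nlinarith
  have hmono := strictMonoOn_of_hasDerivWithinAt_pos (convex_Ici 0)
    (fun y _ => (hG y).continuousAt.continuousWithinAt) (fun y _ => (hG y).hasDerivWithinAt)
    hG_pos
  have h := hmono self_mem_Ici hx.le hx
  simp only [exp_zero, normBesselI_zero hb0, normBesselI'_zero, sub_zero, one_mul] at h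
  nlinarith [exp_pos x]

theorem monotoneOn_exp_mul_sub_normBesselI (hb : 1 / 2 < b) {c : ℝ} (hc : c ≤ 1)
    (hcb : 2 * c ≤ 2 * b - 1) :
    MonotoneOn (fun x => exp x * (x * (normBesselI b x - normBesselI' b x) - c * normBesselI b x))
      (Ici 0) := by
  have hb0 : 0 < b := by linarith
  have hQ : ∀ y, HasDerivAt
      (fun x => exp x * (x * (normBesselI b x - normBesselI' b x) - c * normBesselI b x))
      (exp y * ((1 - c) * (normBesselI b y - normBesselI' b y)
        + (2 * b - 1 - 2 * c) * normBesselI' b y)) y := fun y =>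
    ((hasDerivAt_exp y).mul (((hasDerivAt_id y).mul ((hasDerivAt_normBesselI hb0 y).sub
      (hasDerivAt_normBesselI' hb0 y))).sub ((hasDerivAt_normBesselI hb0 y).const_mul c)))
      |>.congr_deriv (by
        simp only [Pi.sub_apply, Pi.mul_apply, id]
        linear_combination (-exp y) * normBesselI_ode hb0 y)
  refine monotoneOn_of_hasDerivWithinAt_nonneg (convex_Ici 0)
    (fun y _ => (hQ y).continuousAt.continuousWithinAt) (fun y _ => (hQ y).hasDerivWithinAt)
    fun y hy => ?_
  rw [interior_Ici] at hy
  have h1 : 0 ≤ (1 - c) * (normBesselI b y - normBesselI' b y) :=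
    mul_nonneg (by linarith) (sub_nonneg.mpr (normBesselI'_lt hb hy).le)
  have h2 : 0 ≤ (2 * b - 1 - 2 * c) * normBesselI' b y :=
    mul_nonneg (by linarith) (normBesselI'_pos hb0 hy).le
  positivity

theorem mul_normBesselI_le (hb : 1 / 2 < b) {c : ℝ} (hc0 : 0 ≤ c) (hc : c ≤ 1)
    (hcb : 2 * c ≤ 2 * b - 1) {x : ℝ} (hx : 1 ≤ x) :
    c * normBesselI b x ≤ 2 * (x * (normBesselI b x - normBesselI' b x)) := by
  have hb0 : 0 < b := by linarith
  have hQ := monotoneOn_exp_mul_sub_normBesselI hb hc hcb self_mem_Ici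
    (by simp only [mem_Ici]; linarith : x ∈ Ici 0) (by linarith)
  simp only [exp_zero, zero_mul, zero_sub, normBesselI_zero hb0, one_mul, mul_one] at hQ
  have hI := one_le_normBesselI hb0 x
  have hexp : 2 ≤ exp x := by linarith [add_one_le_exp x]
  by_contra! h
  have hneg : x * (normBesselI b x - normBesselI' b x) - c * normBesselI b x ≤ 0 := by nlinarith
  nlinarith [mul_le_mul_of_nonpos_right hexp hneg]

end NormBesselI

theorem psiI_eq (ν x : ℝ) : psiI ν x = x - log (normBesselI (1 + ν) x) := by
  rw [psiI, normBesselI, powSeries]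
  congr 2
  refine tsum_congr fun k => ?_
  rw [hyp0F1Coeff, pow_mul, div_eq_inv_mul]
  ring

section PsiI

variable {ν : ℝ}

theorem hasDerivAt_psiI (hν : -1 < ν) (x : ℝ) :
    HasDerivAt (psiI ν) (1 - normBesselI' (1 + ν) x / normBesselI (1 + ν) x) x := by
  have hb : 0 < 1 + ν := by linarith
  rw [funext (psiI_eq ν)]
  exact (hasDerivAt_id x).sub ((hasDerivAt_normBesselI hb x).log
    (one_pos.trans_le (one_le_normBesselI hb x)).ne')

theorem psiI_zero (hν : -1 < ν) : psiI ν 0 = 0 := by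
  rw [psiI_eq, normBesselI_zero (by linarith), log_one, sub_zero]

theorem strictMonoOn_psiI (hν : -1 / 2 < ν) : StrictMonoOn (psiI ν) (Ioi 0) := by
  have hν' : -1 < ν := by linarith
  refine strictMonoOn_of_hasDerivWithinAt_pos (convex_Ioi 0)
    (fun x _ => (hasDerivAt_psiI hν' x).continuousAt.continuousWithinAt)
    (fun x _ => (hasDerivAt_psiI hν' x).hasDerivWithinAt) fun x hx => ?_
  rw [interior_Ioi] at hx
  have hI := one_pos.trans_le (one_le_normBesselI (by linarith : 0 < 1 + ν) x)
  rw [sub_pos, div_lt_one hI]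
  exact normBesselI'_lt (by linarith) hx

theorem tendsto_psiI_atTop (hν : -1 / 2 < ν) : Tendsto (psiI ν) atTop atTop := by
  have hν' : -1 < ν := by linarith
  have hb : 0 < 1 + ν := by linarith
  set c := min 1 (ν + 1 / 2)
  have hc : 0 < c := lt_min one_pos (by linarith)
  have hderiv : ∀ x, 1 ≤ x →
      c / 2 * x⁻¹ ≤ 1 - normBesselI' (1 + ν) x / normBesselI (1 + ν) x := fun x hx => by
    have hlow := mul_normBesselI_le (b := 1 + ν) (by linarith) hc.le (min_le_left _ _)
      (by linarith [min_le_right 1 (ν + 1 / 2)]) hx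
    have hI := one_le_normBesselI hb x
    rw [one_sub_div (by positivity), le_div_iff₀ (by positivity)]
    field_simp
    nlinarith
  have hmono : MonotoneOn (fun x => psiI ν x - c / 2 * log x) (Ici 1) := by
    have hd : ∀ x ∈ Ici (1 : ℝ), HasDerivAt (fun x => psiI ν x - c / 2 * log x)
        (1 - normBesselI' (1 + ν) x / normBesselI (1 + ν) x - c / 2 * x⁻¹) x := fun x hx =>
      (hasDerivAt_psiI hν' x).sub ((hasDerivAt_log (by simp at hx; linarith)).const_mul _)
    refine monotoneOn_of_hasDerivWithinAt_nonneg (convex_Ici 1)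
      (fun x hx => (hd x hx).continuousAt.continuousWithinAt)
      (fun x hx => (hd x (interior_subset hx)).hasDerivWithinAt) fun x hx => ?_
    rw [interior_Ici] at hx
    exact sub_nonneg.mpr (hderiv x hx.le)
  have hlower : ∀ x, 1 ≤ x → psiI ν 1 + c / 2 * log x ≤ psiI ν x := fun x hx => by
    have := hmono self_mem_Ici hx hx
    simp only [log_one, mul_zero, sub_zero] at this
    linarith
  exact tendsto_atTop_mono' atTop (eventually_atTop.mpr ⟨1, hlower⟩)
    (tendsto_atTop_add_const_left _ _ (tendsto_log_atTop.const_mul_atTop (by positivity)))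

end PsiI

theorem psiI_props {ν : ℝ} (hν : -1/2 < ν) :
    psiI ν 0 = 0 ∧ StrictMonoOn (psiI ν) (Set.Ioi (0 : ℝ)) ∧
      Tendsto (psiI ν) atTop atTop :=
  ⟨psiI_zero (by linarith), strictMonoOn_psiI hν, tendsto_psiI_atTop hν⟩
end

section
/- Let m ≥ 2, σ_1,…,σ_m > -1, p = m+1, and let F(x) = ₀F_m(—; σ_1+1,…,σ_m+1; -(x/p)^p) be the normalized hyper-Bessel function with first positive zero j_{σ,1}. Then ψ(x) = -log F(x) defines a continuous strictly monotone map on [0, j_{σ,1}) with ψ(0) = 0 and ψ(x) → ∞ as x → j_{σ,1}⁻, and its Maclaurin series begins ψ(x) = μ_1 (x/p)^p + (1/2)μ_1(μ_1 - μ_2)(x/p)^{2p} + O(x^{3p}), where μ_k = ∏_j (σ_j + k)^{-1}. -/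
open Real Filter Asymptotics

/-- The normalised hyper-Bessel hypergeometric series
`₀F_m(—; σ_1+1,…,σ_m+1; -(x/(m+1))^{m+1})`. -/
noncomputable def hyperF (m : ℕ) (σ : Fin m → ℝ) (x : ℝ) : ℝ :=
  ∑' k : ℕ, (-(x / (m + 1)) ^ (m + 1)) ^ k /
    ((∏ j, Real.Gamma (σ j + 1 + k) / Real.Gamma (σ j + 1)) * k.factorial)

/-!
With `b = σ + 1`, `F(x) = series b ((x/p)^p)`, where `series b t = ₀F_m(—; b; -t)` is entire.
Termwise, `(series b)' = -(∏ bⱼ)⁻¹ series (b + 1)`, and if `b'` raises `bᵢ` by one then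
`(t^{bᵢ} series b' t)' = bᵢ t^{bᵢ-1} series b t`. So positivity of `series b` on `(0, T)` passes to
`series (b + 1)`, one parameter at a time, and then `series b` decreases on `[0, T]`. With
`T = (j₁/p)^p`, `F` decreases from `1` to `0` on `[0, j₁]`, which gives continuity, monotonicity and
the limit of `ψ = -log F`. The expansion follows from
`series b t = 1 - μ₁ t + μ₁μ₂ t²/2 + O(t³)` and `log (1 + v) = v - v²/2 + O(v³)`.
-/
open Finset Topology Nat

section FactorialBound

variable {a : ℕ → ℝ} {C : ℝ}

theorem summable_mul_pow_of_abs_le (ha : ∀ k, |a k| ≤ C / k !) (t : ℝ) :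
    Summable fun k => a k * t ^ k := by
  refine .of_norm_bounded ((summable_pow_div_factorial |t|).mul_left C) fun k => ?_
  rw [norm_mul, norm_pow, norm_eq_abs, norm_eq_abs, ← mul_div_assoc, mul_div_right_comm]
  gcongr
  exact ha k

theorem summable_natCast_mul_pow_sub_one_div_factorial (r : ℝ) :
    Summable fun k : ℕ => k * r ^ (k - 1) / k ! := by
  refine (summable_nat_add_iff 1).mp ((summable_pow_div_factorial r).congr fun k => ?_)
  rw [factorial_succ, Nat.add_sub_cancel]
  push_cast
  field_simp

theorem summable_natCast_mul_mul_pow_sub_one (ha : ∀ k, |a k| ≤ C / k !) (t : ℝ) :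
    Summable fun k : ℕ => k * a k * t ^ (k - 1) := by
  refine .of_norm_bounded
    ((summable_natCast_mul_pow_sub_one_div_factorial |t|).mul_left C) fun k => ?_
  simp only [norm_mul, norm_pow, norm_eq_abs, Nat.abs_cast]
  calc k * |a k| * |t| ^ (k - 1) ≤ k * (C / k !) * |t| ^ (k - 1) := by gcongr; exact ha k
    _ = C * (k * |t| ^ (k - 1) / k !) := by ring

theorem hasDerivAt_tsum_mul_pow (ha : ∀ k, |a k| ≤ C / k !) (t : ℝ) :
    HasDerivAt (fun s => ∑' k, a k * s ^ k) (∑' k : ℕ, k * a k * t ^ (k - 1)) t := by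
  set R := |t| + 1
  have habs : ∀ k, |(fun k => |a k|) k| ≤ C / k ! := by simpa using ha
  have hderiv (k : ℕ) (y : ℝ) : HasDerivAt (fun s => a k * s ^ k) (k * a k * y ^ (k - 1)) y :=
    by simpa [mul_comm, mul_assoc] using (hasDerivAt_pow k y).const_mul (a k)
  have hbound : ∀ (k : ℕ), ∀ y ∈ Metric.ball (0 : ℝ) R,
      ‖k * a k * y ^ (k - 1)‖ ≤ k * |a k| * R ^ (k - 1) := fun k y hy => by
    rw [mem_ball_zero_iff, norm_eq_abs] at hy
    simp only [norm_mul, norm_pow, norm_eq_abs, Nat.abs_cast]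
    gcongr
  exact hasDerivAt_tsum_of_isPreconnected (summable_natCast_mul_mul_pow_sub_one habs R)
    Metric.isOpen_ball (convex_ball 0 R).isPreconnected (fun k y _ => hderiv k y) hbound
    (Metric.mem_ball_self (by positivity)) (summable_mul_pow_of_abs_le ha 0) (by simp [R])

theorem continuous_tsum_mul_pow (ha : ∀ k, |a k| ≤ C / k !) :
    Continuous fun t => ∑' k, a k * t ^ k :=
  continuous_iff_continuousAt.mpr fun t => (hasDerivAt_tsum_mul_pow ha t).continuousAt

theorem isBigO_tsum_mul_pow_sub_sum_range (ha : ∀ k, |a k| ≤ C / k !) (n : ℕ) :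
    (fun t => ∑' k, a k * t ^ k - ∑ k ∈ range n, a k * t ^ k) =O[𝓝 0] fun t => t ^ n := by
  have hC : 0 ≤ C := by simpa using (abs_nonneg _).trans (ha 0)
  have ha' : ∀ k, |a (k + n)| ≤ C / k ! := fun k =>
    (ha _).trans (div_le_div_of_nonneg_left hC (by positivity)
      (by exact_mod_cast factorial_le (le_add_right le_rfl)))
  have hrem : ∀ t, ∑' k, a k * t ^ k - ∑ k ∈ range n, a k * t ^ k
      = t ^ n * ∑' k, a (k + n) * t ^ k := fun t => by
    rw [← (summable_mul_pow_of_abs_le ha t).sum_add_tsum_nat_add n, ← tsum_mul_left]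
    simp only [add_sub_cancel_left, pow_add]
    congr 1 with k
    ring
  simp only [hrem]
  have hbdd : (fun t => ∑' k, a (k + n) * t ^ k) =O[𝓝 0] fun _ => (1 : ℝ) :=
    ((continuous_tsum_mul_pow ha').tendsto 0).isBigO_one ℝ
  simpa using (isBigO_refl (fun t : ℝ => t ^ n) (𝓝 0)).mul hbdd

theorem one_le_ascPochhammer_eval {x : ℝ} (hx : 1 ≤ x) (k : ℕ) :
    1 ≤ (ascPochhammer ℝ k).eval x := by
  induction k with
  | zero => simp
  | succ k ih =>
    rw [ascPochhammer_succ_eval]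
    exact one_le_mul_of_one_le_of_one_le ih (by linarith [k.cast_nonneg (α := ℝ)])

theorem ascPochhammer_eval_succ_left (x : ℝ) (k : ℕ) :
    (ascPochhammer ℝ (k + 1)).eval x = x * (ascPochhammer ℝ k).eval (x + 1) := by
  simp [ascPochhammer_succ_left, Polynomial.eval_comp]

theorem min_one_le_ascPochhammer_eval {x : ℝ} (hx : 0 < x) (k : ℕ) :
    min 1 x ≤ (ascPochhammer ℝ k).eval x := by
  cases k with
  | zero => simp
  | succ k =>
    rw [ascPochhammer_eval_succ_left]
    exact (min_le_right _ _).trans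
      (le_mul_of_one_le_right hx.le (one_le_ascPochhammer_eval (by linarith) k))

theorem Real.Gamma_add_nat_div_Gamma {x : ℝ} (hx : 0 < x) (k : ℕ) :
    Gamma (x + k) / Gamma x = (ascPochhammer ℝ k).eval x := by
  induction k with
  | zero => simp [(Gamma_pos_of_pos hx).ne']
  | succ k ih =>
    rw [ascPochhammer_succ_eval, ← ih, cast_succ, ← add_assoc, Gamma_add_one (by positivity)]
    ring

theorem isBigO_log_one_add_sub_sq :
    (fun x : ℝ => log (1 + x) - (x - x ^ 2 / 2)) =O[𝓝 0] fun x => x ^ 3 := by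
  have hsmall : ∀ᶠ x : ℝ in 𝓝 0, |x| ≤ 1 / 2 :=
    eventually_abs_sub_lt 0 (by norm_num : (0 : ℝ) < 1 / 2) |>.mono fun x hx => by
      simpa using hx.le
  refine .of_bound 2 (hsmall.mono fun x hx => ?_)
  have h := abs_log_sub_add_sum_range_le (x := -x) (by rw [abs_neg]; linarith) 2
  norm_num [sum_range_succ] at h
  rw [norm_eq_abs, norm_eq_abs, abs_pow]
  calc |log (1 + x) - (x - x ^ 2 / 2)| = |-x + x ^ 2 / 2 + log (1 + x)| := by congr 1; ring
    _ ≤ |x| ^ 3 / (1 - |x|) := h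
    _ ≤ 2 * |x| ^ 3 := by
        rw [div_le_iff₀ (by linarith)]
        nlinarith [mul_nonneg (pow_nonneg (abs_nonneg x) 3) (by linarith : 0 ≤ 1 - 2 * |x|)]

theorem isBigO_log_sub_of_isBigO {f : ℝ → ℝ} {b c : ℝ}
    (hf : (fun t => f t - (1 + b * t + c * t ^ 2)) =O[𝓝 0] fun t => t ^ 3) :
    (fun t => log (f t) - (b * t + (c - b ^ 2 / 2) * t ^ 2)) =O[𝓝 0] fun t => t ^ 3 := by
  have h32 : (fun t : ℝ => t ^ 3) =O[𝓝 0] fun t => t ^ 2 :=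
    (isLittleO_pow_pow (by norm_num)).isBigO
  have h21 : (fun t : ℝ => t ^ 2) =O[𝓝 0] fun t => t := by
    simpa using (isLittleO_pow_pow (𝕜 := ℝ) (by norm_num : 1 < 2)).isBigO
  have hid (a : ℝ) : (fun t : ℝ => a * t) =O[𝓝 0] fun t => t :=
    (isBigO_refl _ _).const_mul_left a
  set v := fun t => f t - 1
  have hv₂ : (fun t => v t - b * t) =O[𝓝 0] fun t => t ^ 2 := by
    refine ((hf.trans h32).add ((isBigO_refl _ _).const_mul_left c)).congr_left fun t => ?_
    simp only [v]; ring
  have hv₁ : v =O[𝓝 0] fun t => t :=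
    ((hv₂.trans h21).add (hid b)).congr_left fun t => by ring
  have hlog : (fun t => log (1 + v t) - (v t - v t ^ 2 / 2)) =O[𝓝 0] fun t => t ^ 3 :=
    (isBigO_log_one_add_sub_sq.comp_tendsto (hv₁.trans_tendsto tendsto_id)).trans (hv₁.pow 3)
  have hsq : (fun t => (v t - b * t) * (v t + b * t)) =O[𝓝 0] fun t => t ^ 3 :=
    (hv₂.mul (hv₁.add (hid b))).congr_right fun t => by ring
  refine (hlog.add (hf.sub (hsq.const_mul_left (1 / 2)))).congr_left fun t => ?_
  simp only [v, add_sub_cancel]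
  ring

namespace HyperBessel

variable {ι : Type*} {b : ι → ℝ}

theorem update_add_one_pos [DecidableEq ι] (hb : ∀ j, 0 < b j) (i : ι) :
    ∀ j, 0 < Function.update b i (b i + 1) j := by
  intro j
  rcases eq_or_ne j i with rfl | hj
  · simp only [Function.update_self]; linarith [hb j]
  · rw [Function.update_of_ne hj]; exact hb j

variable [Fintype ι]

noncomputable def pochProd (b : ι → ℝ) (k : ℕ) : ℝ := ∏ j, (ascPochhammer ℝ k).eval (b j)

noncomputable def coeff (b : ι → ℝ) (k : ℕ) : ℝ := (-1) ^ k / (pochProd b k * k !)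

noncomputable def series (b : ι → ℝ) (t : ℝ) : ℝ := ∑' k, coeff b k * t ^ k

theorem pochProd_pos (hb : ∀ j, 0 < b j) (k : ℕ) : 0 < pochProd b k :=
  prod_pos fun j _ => ascPochhammer_pos k _ (hb j)

theorem pochProd_succ (b : ι → ℝ) (k : ℕ) :
    pochProd b (k + 1) = (∏ j, b j) * pochProd (fun j => b j + 1) k := by
  simp only [pochProd, ascPochhammer_eval_succ_left, prod_mul_distrib]

theorem pochProd_update_mul [DecidableEq ι] (b : ι → ℝ) (i : ι) (k : ℕ) :
    pochProd (Function.update b i (b i + 1)) k * b i = pochProd b k * (b i + k) := by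
  have key : (ascPochhammer ℝ k).eval (b i + 1) * b i
      = (ascPochhammer ℝ k).eval (b i) * (b i + k) := by
    rw [mul_comm, ← ascPochhammer_eval_succ_left, ascPochhammer_succ_eval]
  have hcompl : ∏ j ∈ {i}ᶜ, (ascPochhammer ℝ k).eval (Function.update b i (b i + 1) j)
      = ∏ j ∈ {i}ᶜ, (ascPochhammer ℝ k).eval (b j) :=
    prod_congr rfl fun j hj => by rw [Function.update_of_ne (by simpa using hj)]
  rw [pochProd, pochProd, Fintype.prod_eq_mul_prod_compl i, Fintype.prod_eq_mul_prod_compl i,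
    Function.update_self, hcompl]
  linear_combination (∏ j ∈ {i}ᶜ, (ascPochhammer ℝ k).eval (b j)) * key

theorem abs_coeff_le (hb : ∀ j, 0 < b j) (k : ℕ) :
    |coeff b k| ≤ (∏ j, min 1 (b j))⁻¹ / k ! := by
  have hmin : 0 < ∏ j, min 1 (b j) := prod_pos fun j _ => lt_min one_pos (hb j)
  have hle : ∏ j, min 1 (b j) ≤ pochProd b k :=
    prod_le_prod (fun j _ => (lt_min one_pos (hb j)).le)
      fun j _ => min_one_le_ascPochhammer_eval (hb j) k
  rw [coeff, abs_div, abs_pow, abs_neg, abs_one, one_pow,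
    abs_of_pos (by have := pochProd_pos hb k; positivity), one_div, mul_inv, ← div_eq_mul_inv]
  gcongr

theorem coeff_zero (b : ι → ℝ) : coeff b 0 = 1 := by
  simp [coeff, pochProd]

theorem succ_mul_coeff_succ (hb : ∀ j, 0 < b j) (k : ℕ) :
    (k + 1) * coeff b (k + 1) = -(∏ j, b j)⁻¹ * coeff (fun j => b j + 1) k := by
  have h₁ : (∏ j, b j) ≠ 0 := (prod_pos fun j _ => hb j).ne'
  have h₂ := (pochProd_pos (b := fun j => b j + 1) (fun j => by linarith [hb j]) k).ne'
  rw [coeff, coeff, pochProd_succ, factorial_succ]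
  push_cast
  field_simp
  ring

theorem coeff_one (hb : ∀ j, 0 < b j) : coeff b 1 = -(∏ j, b j)⁻¹ := by
  simpa [coeff_zero] using succ_mul_coeff_succ hb 0

theorem coeff_two (hb : ∀ j, 0 < b j) :
    coeff b 2 = (∏ j, b j)⁻¹ * (∏ j, (b j + 1))⁻¹ / 2 := by
  have h := succ_mul_coeff_succ hb 1
  rw [coeff_one fun j => by linarith [hb j]] at h
  norm_num at h
  linarith

theorem coeff_update [DecidableEq ι] (hb : ∀ j, 0 < b j) (i : ι) (k : ℕ) :
    (b i + k) * coeff (Function.update b i (b i + 1)) k = b i * coeff b k := by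
  have h₁ := (pochProd_pos hb k).ne'
  have h₂ := (pochProd_pos (update_add_one_pos hb i) k).ne'
  have h₃ := pochProd_update_mul b i k
  rw [coeff, coeff]
  field_simp
  linear_combination -h₃

theorem series_zero (b : ι → ℝ) : series b 0 = 1 := by
  rw [series, tsum_eq_single 0 fun k hk => by simp [hk], pow_zero, mul_one, coeff_zero]

theorem continuous_series (hb : ∀ j, 0 < b j) : Continuous (series b) :=
  continuous_tsum_mul_pow (abs_coeff_le hb)

theorem hasDerivAt_series (hb : ∀ j, 0 < b j) (t : ℝ) :
    HasDerivAt (series b) (-(∏ j, b j)⁻¹ * series (fun j => b j + 1) t) t := by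
  have h := hasDerivAt_tsum_mul_pow (abs_coeff_le hb) t
  rw [(summable_natCast_mul_mul_pow_sub_one (abs_coeff_le hb) t).tsum_eq_zero_add] at h
  refine h.congr_deriv ?_
  rw [series, ← tsum_mul_left]
  simp only [cast_zero, zero_mul, zero_add, cast_succ, Nat.add_sub_cancel, ← mul_assoc,
    ← succ_mul_coeff_succ hb]

theorem series_update_identity [DecidableEq ι] (hb : ∀ j, 0 < b j) (i : ι) (t : ℝ) :
    b i * series (Function.update b i (b i + 1)) t
      + t * ∑' k : ℕ, k * coeff (Function.update b i (b i + 1)) k * t ^ (k - 1)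
      = b i * series b t := by
  have hb' := abs_coeff_le (update_add_one_pos hb i)
  have h := ((summable_mul_pow_of_abs_le hb' t).hasSum.mul_left (b i)).add
    ((summable_natCast_mul_mul_pow_sub_one hb' t).hasSum.mul_left t)
  simp only [series]
  rw [← h.tsum_eq, ← tsum_mul_left]
  congr 1 with k
  have hk := coeff_update hb i k
  rcases k with _ | k
  · simpa using hk
  · simp only [Nat.add_sub_cancel, cast_succ] at hk ⊢
    linear_combination t ^ (k + 1) * hk

theorem series_update_pos [DecidableEq ι] (hb : ∀ j, 0 < b j) (i : ι) {T : ℝ}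
    (hpos : ∀ t ∈ Set.Ioo 0 T, 0 < series b t) :
    ∀ t ∈ Set.Ioo 0 T, 0 < series (Function.update b i (b i + 1)) t := by
  have hid := series_update_identity hb i
  have hb' := update_add_one_pos hb i
  set b' := Function.update b i (b i + 1)
  have hmono : StrictMonoOn (fun t => t ^ b i * series b' t) (Set.Icc 0 T) := by
    refine strictMonoOn_of_deriv_pos (convex_Icc 0 T)
      ((continuous_rpow_const (hb i).le).mul (continuous_series hb')).continuousOn fun t ht => ?_
    rw [interior_Icc] at ht
    have hd : HasDerivAt (fun t => t ^ b i * series b' t) (b i * t ^ (b i - 1) * series b' t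
        + t ^ b i * ∑' k : ℕ, k * coeff b' k * t ^ (k - 1)) t :=
      (hasDerivAt_rpow_const (Or.inl ht.1.ne')).mul (hasDerivAt_tsum_mul_pow (abs_coeff_le hb') t)
    have hfactor : b i * t ^ (b i - 1) * series b' t
        + t ^ b i * ∑' k : ℕ, k * coeff b' k * t ^ (k - 1)
        = t ^ (b i - 1) * (b i * series b t) := by
      have ht₀ : t ≠ 0 := ht.1.ne'
      rw [← hid t, rpow_sub_one ht₀]
      field_simp
    rw [hd.deriv, hfactor]
    exact mul_pos (rpow_pos_of_pos ht.1 _) (mul_pos (hb i) (hpos t ht))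
  intro t ht
  have h := hmono (Set.left_mem_Icc.2 (ht.1.trans ht.2).le) ⟨ht.1.le, ht.2.le⟩ ht.1
  dsimp only at h
  rw [zero_rpow (hb i).ne', zero_mul] at h
  exact (mul_pos_iff_of_pos_left (rpow_pos_of_pos ht.1 _)).1 h

theorem series_add_one_pos (hb : ∀ j, 0 < b j) {T : ℝ}
    (hpos : ∀ t ∈ Set.Ioo 0 T, 0 < series b t) :
    ∀ t ∈ Set.Ioo 0 T, 0 < series (fun j => b j + 1) t := by
  classical
  suffices h : ∀ S : Finset ι, ∀ t ∈ Set.Ioo 0 T,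
      0 < series (fun j => b j + if j ∈ S then 1 else 0) t by
    simpa using h univ
  intro S
  induction S using Finset.induction_on with
  | empty => simpa using hpos
  | insert i S hi ih =>
    have hbS : ∀ j, 0 < b j + if j ∈ S then 1 else 0 := fun j => by
      split_ifs <;> linarith [hb j]
    have heq : (fun j => b j + if j ∈ insert i S then 1 else 0)
        = Function.update (fun j => b j + if j ∈ S then 1 else 0) i
          ((b i + if i ∈ S then 1 else 0) + 1) := by
      ext j
      rcases eq_or_ne j i with rfl | hj
      · simp [hi]
      · simp [hj]
    rw [heq]
    exact series_update_pos hbS i ih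

theorem strictAntiOn_series (hb : ∀ j, 0 < b j) {T : ℝ}
    (hpos : ∀ t ∈ Set.Ioo 0 T, 0 < series b t) : StrictAntiOn (series b) (Set.Icc 0 T) := by
  refine strictAntiOn_of_deriv_neg (convex_Icc 0 T) (continuous_series hb).continuousOn
    fun t ht => ?_
  rw [interior_Icc] at ht
  rw [(hasDerivAt_series hb t).deriv, neg_mul, neg_lt_zero]
  exact mul_pos (inv_pos.2 (prod_pos fun j _ => hb j)) (series_add_one_pos hb hpos t ht)

end HyperBessel

open HyperBessel

theorem pos_of_continuous_of_forall_ne_zero {f : ℝ → ℝ} (hf : Continuous f) {a b : ℝ}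
    (ha : 0 < f a) (hne : ∀ y ∈ Set.Ioo a b, f y ≠ 0) : ∀ x ∈ Set.Ico a b, 0 < f x := by
  intro x hx
  by_contra! hfx
  obtain ⟨y, hy, hy0⟩ := intermediate_value_Icc' hx.1 hf.continuousOn ⟨hfx, ha.le⟩
  have hya : y ≠ a := by rintro rfl; linarith
  exact hne y ⟨lt_of_le_of_ne hy.1 hya.symm, hy.2.trans_lt hx.2⟩ hy0

section HyperF

variable {m : ℕ} {σ : Fin m → ℝ}

theorem hyperF_eq_series (hσ : ∀ j, -1 < σ j) (x : ℝ) :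
    hyperF m σ x = series (fun j => σ j + 1) ((x / (m + 1 : ℕ)) ^ (m + 1)) := by
  rw [hyperF, series]
  congr 1 with k
  rw [coeff, pochProd, neg_pow, ← prod_congr rfl fun j _ =>
    Real.Gamma_add_nat_div_Gamma (neg_lt_iff_pos_add.mp (hσ j)) k]
  push_cast
  ring

theorem continuous_hyperF (hσ : ∀ j, -1 < σ j) : Continuous (hyperF m σ) := by
  simp only [funext (hyperF_eq_series hσ)]
  exact (continuous_series fun j => neg_lt_iff_pos_add.mp (hσ j)).comp
    ((continuous_id.div_const _).pow _)

theorem hyperF_zero (hσ : ∀ j, -1 < σ j) : hyperF m σ 0 = 1 := by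
  simp [hyperF_eq_series hσ, series_zero]

theorem hyperF_pos (hσ : ∀ j, -1 < σ j) {j₁ : ℝ}
    (hfirst : ∀ y ∈ Set.Ioo (0 : ℝ) j₁, hyperF m σ y ≠ 0) :
    ∀ x ∈ Set.Ico 0 j₁, 0 < hyperF m σ x :=
  pos_of_continuous_of_forall_ne_zero (continuous_hyperF hσ) (by simp [hyperF_zero hσ]) hfirst

theorem strictAntiOn_hyperF (hσ : ∀ j, -1 < σ j) {j₁ : ℝ}
    (hfirst : ∀ y ∈ Set.Ioo (0 : ℝ) j₁, hyperF m σ y ≠ 0) :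
    StrictAntiOn (hyperF m σ) (Set.Ico 0 j₁) := by
  intro x hx y hy hxy
  have hb : ∀ j, 0 < σ j + 1 := fun j => neg_lt_iff_pos_add.mp (hσ j)
  set T : ℝ → ℝ := fun x => (x / (m + 1 : ℕ)) ^ (m + 1)
  have hTmono : ∀ x y, 0 ≤ x → x < y → T x < T y := fun x y hx hxy =>
    pow_lt_pow_left₀ (div_lt_div_of_pos_right hxy (by positivity)) (by positivity) (succ_ne_zero m)
  have hser : ∀ t ∈ Set.Ioo 0 (T j₁), 0 < series (fun j => σ j + 1) t := by
    intro t ht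
    obtain ⟨z, hz, rfl⟩ := intermediate_value_Ioo (hx.1.trans hx.2.le)
      (Continuous.continuousOn (by fun_prop) : ContinuousOn T _) (by simpa [T] using ht)
    rw [← hyperF_eq_series hσ]
    exact hyperF_pos hσ hfirst z ⟨hz.1.le, hz.2⟩
  have hmem : ∀ z ∈ Set.Ico 0 j₁, T z ∈ Set.Icc 0 (T j₁) := fun z hz =>
    ⟨pow_nonneg (div_nonneg hz.1 (by positivity)) _, (hTmono z j₁ hz.1 hz.2).le⟩
  rw [hyperF_eq_series hσ, hyperF_eq_series hσ]
  exact strictAntiOn_series hb hser (hmem x hx) (hmem y hy) (hTmono x y hx.1 hxy)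

theorem isBigO_neg_log_hyperF (hσ : ∀ j, -1 < σ j) {μ : ℕ → ℝ}
    (hμ : ∀ k, μ k = ∏ j, (σ j + k)⁻¹) :
    (fun x : ℝ => -log (hyperF m σ x) - (μ 1 * (x / (m + 1 : ℕ)) ^ (m + 1)
        + 1 / 2 * μ 1 * (μ 1 - μ 2) * (x / (m + 1 : ℕ)) ^ (2 * (m + 1))))
      =O[𝓝 0] fun x => x ^ (3 * (m + 1)) := by
  set b : Fin m → ℝ := fun j => σ j + 1
  have hb : ∀ j, 0 < b j := fun j => neg_lt_iff_pos_add.mp (hσ j)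
  have hμ₁ : μ 1 = (∏ j, b j)⁻¹ := by simp [hμ, b, prod_inv_distrib]
  have hμ₂ : μ 2 = (∏ j, (b j + 1))⁻¹ := by
    simp only [hμ, b, prod_inv_distrib, cast_ofNat, add_assoc, one_add_one_eq_two]
  have hseries : (fun t => series b t - (1 + coeff b 1 * t + coeff b 2 * t ^ 2))
      =O[𝓝 0] fun t => t ^ 3 := by
    simpa [series, sum_range_succ, coeff_zero, add_assoc] using
      isBigO_tsum_mul_pow_sub_sum_range (abs_coeff_le hb) 3
  have hT : Tendsto (fun x : ℝ => (x / (m + 1 : ℕ)) ^ (m + 1)) (𝓝 0) (𝓝 0) := by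
    simpa using (by fun_prop : Continuous fun x : ℝ => (x / (m + 1 : ℕ)) ^ (m + 1)).tendsto 0
  have hT₃ : (fun x : ℝ => ((x / (m + 1 : ℕ)) ^ (m + 1)) ^ 3) =O[𝓝 0]
      fun x => x ^ (3 * (m + 1)) :=
    ((isBigO_refl _ _).const_mul_left (((m + 1 : ℕ) : ℝ) ^ (3 * (m + 1)))⁻¹).congr_left
      fun x => by rw [← pow_mul, div_pow]; ring
  refine ((isBigO_log_sub_of_isBigO hseries).neg_left.comp_tendsto hT |>.trans hT₃).congr_left
    fun x => ?_
  simp only [Function.comp_apply, hyperF_eq_series hσ, coeff_one hb, coeff_two hb, hμ₁, hμ₂]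
  ring

end HyperF

theorem hyperBessel_psi_props_general {m : ℕ} (σ : Fin m → ℝ)
    (hσ : ∀ j, -1 < σ j) (p : ℕ) (hp : p = m + 1)
    (μ : ℕ → ℝ) (hμ : ∀ k, μ k = ∏ j, (σ j + k)⁻¹)
    (j₁ : ℝ) (hj₁ : 0 < j₁) (hzero : hyperF m σ j₁ = 0)
    (hfirst : ∀ y ∈ Set.Ioo (0 : ℝ) j₁, hyperF m σ y ≠ 0)
    (ψ : ℝ → ℝ) (hψ : ∀ x, ψ x = -Real.log (hyperF m σ x)) :
    ContinuousOn ψ (Set.Ico 0 j₁) ∧ StrictMonoOn ψ (Set.Ico 0 j₁) ∧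
      ψ 0 = 0 ∧ Tendsto ψ (nhdsWithin j₁ (Set.Iio j₁)) atTop ∧
      (fun x : ℝ => ψ x -
          (μ 1 * (x / p) ^ p + 1 / 2 * μ 1 * (μ 1 - μ 2) * (x / p) ^ (2 * p)))
        =O[nhdsWithin 0 (Set.Ioi 0)] fun x : ℝ => x ^ (3 * p) := by
  obtain rfl : ψ = fun x => -log (hyperF m σ x) := funext hψ
  subst hp
  have hcont := continuous_hyperF hσ
  have hpos := hyperF_pos hσ hfirst
  refine ⟨fun x hx => ((hcont.continuousAt.log (hpos x hx).ne').neg).continuousWithinAt,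
    fun x hx y hy hxy =>
      neg_lt_neg (log_lt_log (hpos y hy) (strictAntiOn_hyperF hσ hfirst hx hy hxy)),
    by simp [hyperF_zero hσ], ?_, (isBigO_neg_log_hyperF hσ hμ).mono nhdsWithin_le_nhds⟩
  have hF : Tendsto (hyperF m σ) (𝓝[<] j₁) (𝓝[>] 0) := by
    refine tendsto_nhdsWithin_iff.mpr ⟨hzero ▸ hcont.continuousWithinAt.tendsto, ?_⟩
    filter_upwards [Ioo_mem_nhdsLT hj₁] with x hx using hpos x ⟨hx.1.le, hx.2⟩
  exact tendsto_neg_atBot_atTop.comp (tendsto_log_nhdsGT_zero.comp hF)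

theorem hyperBessel_psi_props {m : ℕ} (hm : 2 ≤ m) (σ : Fin m → ℝ)
    (hσ : ∀ j, -1 < σ j) (p : ℕ) (hp : p = m + 1)
    (μ : ℕ → ℝ) (hμ : ∀ k, μ k = ∏ j, (σ j + k)⁻¹)
    (j₁ : ℝ) (hj₁ : 0 < j₁) (hzero : hyperF m σ j₁ = 0)
    (hfirst : ∀ y ∈ Set.Ioo (0 : ℝ) j₁, hyperF m σ y ≠ 0)
    (ψ : ℝ → ℝ) (hψ : ∀ x, ψ x = -Real.log (hyperF m σ x)) :
    ContinuousOn ψ (Set.Ico 0 j₁) ∧ StrictMonoOn ψ (Set.Ico 0 j₁) ∧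
      ψ 0 = 0 ∧ Tendsto ψ (nhdsWithin j₁ (Set.Iio j₁)) atTop ∧
      (fun x : ℝ => ψ x -
          (μ 1 * (x / p) ^ p + 1 / 2 * μ 1 * (μ 1 - μ 2) * (x / p) ^ (2 * p)))
        =O[nhdsWithin 0 (Set.Ioi 0)] fun x : ℝ => x ^ (3 * p) :=
  hyperBessel_psi_props_general σ hσ p hp μ hμ j₁ hj₁ hzero hfirst ψ hψ
end FactorialBound
end
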